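/- arXiv:2407.05896 — 5 statements merged into one kernel-verified Lean document; each statement's English description precedes it below -/
import Mathlib

section
/- Fix d ≥ 2, rates λ_1,…,λ_d > 0, indices 1 ≤ i < j ≤ d and 1 ≤ k ≤ i. Let Ω = (ω_{rs}) and Ω′ = (ω′_{rs}) be two admissible weight arrays (ω_{rs}, ω′_{rs} ∈ [0,1] for s ≤ r, ω_{11} = ω′_{11} = 1, and Σ_{s=1}^{r} ω_{rs} = Σ_{s=1}^{r} ω′_{rs} = 1 for every r) such that ω_{iℓ} = ω′_{iℓ} for every ℓ ∈ {1,…,i}, ω_{jℓ} = ω′_{jℓ} for every ℓ ∈ {1,…,i} with ℓ ≠ k, and ω_{jk} < ω′_{jk}. Let X = (X_1,…,X_d) be the MP_d(Λ,Ω) vector on ((0,1)^d, μ^d) and X′ = (X′_1,…,X′_d) the MP_d(Λ,Ω′) vector on another copy of ((0,1)^d, μ^d). Then for all s, t ∈ ℕ, μ^d{u : X_i(u) ≤ s and X_j(u) ≤ t} ≤ μ^d{u : X′_i(u) ≤ s and X′_j(u) ≤ t}; that is, (X_i, X_j) precedes (X′_i, X′_j) in the positive quadrant dependence (PQD) order.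 -/
open MeasureTheory

/-- The uniform probability measure on the open interval (0,1):
Lebesgue measure restricted to (0,1). -/
noncomputable def unif : Measure ℝ := volume.restrict (Set.Ioo (0 : ℝ) 1)

/-- The quantile transform of a cdf `F` on ℕ: `q_F(u) = min {n : u ≤ F n}`. -/
noncomputable def qt (F : ℕ → ℝ) (u : ℝ) : ℕ := sInf {n : ℕ | u ≤ F n}

/-- The Poisson(λ) cumulative distribution function on ℕ. -/
noncomputable def poisCdf (l : ℝ) (n : ℕ) : ℝ :=
  ∑ k ∈ Finset.range (n + 1), Real.exp (-l) * l ^ k / (Nat.factorial k)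

/-- The Poisson(λ) probability mass function on ℕ. -/
noncomputable def poisPmf (l : ℝ) (n : ℕ) : ℝ :=
  Real.exp (-l) * l ^ n / (Nat.factorial n)

/-- `F(n-1)` with the convention `F(-1) = 0`. -/
noncomputable def cdfm1 (F : ℕ → ℝ) (n : ℕ) : ℝ := if n = 0 then 0 else F (n - 1)

/-- The product measure μ^d of the uniform measure on (0,1) over coordinates. -/
noncomputable def pmeas (d : ℕ) : Measure (Fin d → ℝ) := Measure.pi (fun _ => unif)

/-- Component `i` of the MP_d(Λ,Ω) vector: `X_i(u) = Σ_{j ≤ i} q_{ω_{ij} λ_i}(u_j)`. -/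
noncomputable def mpX (d : ℕ) (lam : Fin d → ℝ) (om : Fin d → Fin d → ℝ)
    (i : Fin d) (u : Fin d → ℝ) : ℕ :=
  ∑ j ∈ Finset.Iic i, qt (poisCdf (om i j * lam i)) (u j)

/-!
Write `U = u_k`, let `V` collect the summands of `X_i, X_j` coming from the other coordinates
`l ≤ i`, and `W` those of `X_j` coming from the coordinates in `(i, j]`. Then
`(X_i, X_j) = (q_ν(U) + V₁, q_A(U) + W + V₂)` with `U` uniform, `W` Poisson, and `U`, `W`, `V`
independent; `V` is the same for `Ω` and `Ω′`, while passing to `Ω′` moves the rate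
`δ = (ω′_{jk} - ω_{jk}) λ_j` from `W` to the shared coordinate: `A ↦ A + δ`, `W ~ Po(C + δ) ↦ Po(C)`.
Split `Po(C + δ) = Po(C) ∗ Po(δ)` and condition on everything but `U` and the `Po(δ)` part `W₂`:
the event becomes `{U ≤ a} ∩ {q_A(U) + W₂ ≤ n}`, of probability at most
`min(a, P(q_A(U) + W₂ ≤ n)) = min(a, F_{A+δ}(n))` because `q_A(U) + W₂ ~ Po(A + δ)`, and this
Fréchet bound is attained by the comonotone event `{U ≤ a} ∩ {q_{A+δ}(U) ≤ n}` of the `Ω′` model.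
-/

open ProbabilityTheory Set
open scoped NNReal ENNReal

lemma sum_Iic_eq_add_sum_Ioc_add_sum_erase {α M : Type*} [LinearOrder α] [LocallyFiniteOrder α]
    [LocallyFiniteOrderBot α] [AddCommMonoid M] (f : α → M) {i j k : α} (hij : i ≤ j)
    (hki : k ≤ i) :
    ∑ l ∈ Finset.Iic j, f l
      = f k + (∑ l ∈ Finset.Ioc i j, f l + ∑ l ∈ (Finset.Iic i).erase k, f l) := by
  have hdisj : Disjoint (Finset.Iic i) (Finset.Ioc i j) :=
    Finset.disjoint_left.2 fun l hl hl' => (Finset.mem_Ioc.1 hl').1.not_ge (Finset.mem_Iic.1 hl)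
  rw [← Finset.Iic_union_Ioc_eq_Iic hij, Finset.sum_union hdisj,
    ← Finset.add_sum_erase _ _ (Finset.mem_Iic.2 hki), add_comm (∑ l ∈ Finset.Ioc i j, f l),
    add_assoc]

lemma poisCdf_eq_sum_poisPmf (l : ℝ) (n : ℕ) :
    poisCdf l n = ∑ k ∈ Finset.range (n + 1), poisPmf l k := rfl

lemma poisPmf_nonneg {l : ℝ} (hl : 0 ≤ l) (n : ℕ) : 0 ≤ poisPmf l n := by
  unfold poisPmf; positivity

lemma poisCdf_mono {l : ℝ} (hl : 0 ≤ l) : Monotone (poisCdf l) :=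
  monotone_nat_of_le_succ fun n => by
    rw [poisCdf_eq_sum_poisPmf, poisCdf_eq_sum_poisPmf, Finset.sum_range_succ _ (n + 1)]
    exact le_add_of_nonneg_right (poisPmf_nonneg hl _)

lemma ofReal_poisCdf {l : ℝ} (hl : 0 ≤ l) (n : ℕ) :
    ENNReal.ofReal (poisCdf l n) = Po(l.toNNReal) (Iic n) := by
  rw [poisCdf_eq_sum_poisPmf, ENNReal.ofReal_sum_of_nonneg fun k _ => poisPmf_nonneg hl k,
    Nat.range_succ_eq_Iic, ← Finset.coe_Iic, ← sum_measure_singleton]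
  refine Finset.sum_congr rfl fun k _ => ?_
  rw [poissonMeasure_singleton, Real.coe_toNNReal l hl, poisPmf]

lemma poisCdf_le_one {l : ℝ} (hl : 0 ≤ l) (n : ℕ) : poisCdf l n ≤ 1 :=
  ENNReal.ofReal_le_one.1 (ofReal_poisCdf hl n ▸ prob_le_one)

lemma exists_le_poisCdf {l : ℝ} (hl : 0 ≤ l) {u : ℝ} (hu : u < 1) :
    ∃ n, u ≤ poisCdf l n := by
  lift l to ℝ≥0 using hl
  obtain ⟨n, hn⟩ := ((hasSum_one_poissonMeasure l).tendsto_sum_nat.eventually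
    (lt_mem_nhds hu)).exists_forall_of_atTop
  exact ⟨n, (hn (n + 1) n.le_succ).le⟩

lemma poissonMeasure_zero : Po(0) = Measure.dirac 0 :=
  Measure.ext_of_singleton fun n => by cases n <;> simp [poissonMeasure_singleton]

lemma qt_le_iff {F : ℕ → ℝ} (hF : Monotone F) {u : ℝ} (hu : ∃ m, u ≤ F m) (n : ℕ) :
    qt F u ≤ n ↔ u ≤ F n :=
  ⟨fun h => le_trans (Nat.sInf_mem hu) (hF h), fun h => Nat.sInf_le h⟩

lemma qt_poisCdf_le_iff {l : ℝ} (hl : 0 ≤ l) {u : ℝ} (hu : u < 1) (n : ℕ) :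
    qt (poisCdf l) u ≤ n ↔ u ≤ poisCdf l n :=
  qt_le_iff (poisCdf_mono hl) (exists_le_poisCdf hl hu) n

lemma qt_le_iff_or (F : ℕ → ℝ) (u : ℝ) (n : ℕ) :
    qt F u ≤ n ↔ (∃ m ≤ n, u ≤ F m) ∨ ∀ m, F m < u := by
  by_cases hu : ∃ m, u ≤ F m
  · have : ¬ ∀ m, F m < u := fun h => hu.elim fun m hm => (h m).not_ge hm
    simp only [this, or_false]
    exact ⟨fun h => ⟨qt F u, h, Nat.sInf_mem hu⟩, fun ⟨m, hm, h⟩ => (Nat.sInf_le h).trans hm⟩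
  · push Not at hu
    have : qt F u = 0 :=
      Nat.sInf_eq_zero.2 (Or.inr (eq_empty_of_forall_notMem fun m hm => (hu m).not_ge hm))
    simp [this, hu]

@[fun_prop]
lemma measurable_qt (F : ℕ → ℝ) : Measurable (qt F) := by
  refine measurable_of_Iic fun n => ?_
  have : qt F ⁻¹' Iic n = (⋃ m ∈ Iic n, Iic (F m)) ∪ ⋂ m, Ioi (F m) := by
    ext u; simp [qt_le_iff_or]
  rw [this]
  exact (MeasurableSet.biUnion (to_countable _) fun m _ => measurableSet_Iic).union
    (MeasurableSet.iInter fun m => measurableSet_Ioi)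

instance : IsProbabilityMeasure unif :=
  ⟨by simp [unif]⟩

instance (d : ℕ) : IsProbabilityMeasure (pmeas d) := by
  unfold pmeas; infer_instance

lemma unif_apply (B : Set ℝ) : unif B = volume (B ∩ Ioo 0 1) :=
  Measure.restrict_apply' measurableSet_Ioo

def IsInitialInUnitInterval (B : Set ℝ) : Prop :=
  ∃ c, ∀ x ∈ Ioo (0 : ℝ) 1, x ∈ B ↔ x ≤ c

lemma unif_eq_ofReal {B : Set ℝ} {c : ℝ} (hc : c ≤ 1)
    (hB : ∀ x ∈ Ioo (0 : ℝ) 1, x ∈ B ↔ x ≤ c) : unif B = ENNReal.ofReal c := by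
  rw [unif_apply]
  refine le_antisymm ?_ ?_
  · calc volume (B ∩ Ioo 0 1) ≤ volume (Ioc 0 c) :=
          measure_mono fun x ⟨hxB, hx⟩ => ⟨hx.1, (hB x hx).1 hxB⟩
      _ = ENNReal.ofReal c := by rw [Real.volume_Ioc, sub_zero]
  · calc ENNReal.ofReal c = volume (Ioo 0 c) := by rw [Real.volume_Ioo, sub_zero]
      _ ≤ volume (B ∩ Ioo 0 1) := measure_mono fun x ⟨hx0, hxc⟩ =>
          have hx : x ∈ Ioo (0 : ℝ) 1 := ⟨hx0, hxc.trans_le hc⟩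
          ⟨(hB x hx).2 hxc.le, hx⟩

lemma unif_inter_eq_min {B B' : Set ℝ} (hB : IsInitialInUnitInterval B)
    (hB' : IsInitialInUnitInterval B') : unif (B ∩ B') = min (unif B) (unif B') := by
  obtain ⟨c, hc⟩ := hB
  obtain ⟨c', hc'⟩ := hB'
  wlog h : c ≤ c' generalizing B B' c c'
  · rw [inter_comm, min_comm]; exact this c' hc' c hc (le_of_not_ge h)
  have hsub : B ∩ Ioo 0 1 ⊆ B' := fun x ⟨hxB, hx⟩ =>
    (hc' x hx).2 (((hc x hx).1 hxB).trans h)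
  have heq : B ∩ B' ∩ Ioo 0 1 = B ∩ Ioo 0 1 :=
    ext fun x => ⟨fun ⟨⟨hxB, _⟩, hx⟩ => ⟨hxB, hx⟩, fun ⟨hxB, hx⟩ => ⟨⟨hxB, hsub ⟨hxB, hx⟩⟩, hx⟩⟩
  rw [unif_apply, heq, ← unif_apply]
  exact (min_eq_left (by
    rw [unif_apply, unif_apply]; exact measure_mono fun x hx => ⟨hsub hx, hx.2⟩)).symm

lemma isInitialInUnitInterval_qt_add_le {l : ℝ} (hl : 0 ≤ l) (k t : ℕ) :
    IsInitialInUnitInterval {x | qt (poisCdf l) x + k ≤ t} := by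
  by_cases hkt : k ≤ t
  · refine ⟨poisCdf l (t - k), fun x hx => ?_⟩
    show qt (poisCdf l) x + k ≤ t ↔ _
    rw [← qt_poisCdf_le_iff hl hx.2]
    omega
  · exact ⟨0, fun x hx => iff_of_false (fun h => hkt (by simp at h; omega)) hx.1.not_ge⟩

lemma hasLaw_qt_poisCdf {l : ℝ} (hl : 0 ≤ l) : HasLaw (qt (poisCdf l)) Po(l.toNNReal) unif where
  aemeasurable := (measurable_qt _).aemeasurable
  map_eq := Measure.ext_of_Iic _ _ fun n => by
    rw [Measure.map_apply (measurable_qt _) measurableSet_Iic, ← ofReal_poisCdf hl]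
    exact unif_eq_ofReal (poisCdf_le_one hl n) fun x hx => qt_poisCdf_le_iff hl hx.2 n

lemma measurableSet_fst_mem_and_qt_add_le {B : Set ℝ} (hB : MeasurableSet B) (A : ℝ)
    (b t : ℕ) : MeasurableSet {p : ℝ × ℕ | p.1 ∈ B ∧ qt (poisCdf A) p.1 + (p.2 + b) ≤ t} :=
  (measurable_fst hB).inter (measurableSet_le
    (f := fun p : ℝ × ℕ => qt (poisCdf A) p.1 + (p.2 + b)) (by fun_prop) measurable_const)

lemma prod_poissonMeasure_le_unif {B : Set ℝ} (hB : IsInitialInUnitInterval B)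
    {A δ : ℝ} (hA : 0 ≤ A) (hδ : 0 ≤ δ) (k t : ℕ) :
    (unif.prod Po(δ.toNNReal)) {p | p.1 ∈ B ∧ qt (poisCdf A) p.1 + (p.2 + k) ≤ t}
      ≤ unif {x | x ∈ B ∧ qt (poisCdf (A + δ)) x + k ≤ t} := by
  have hsum : HasLaw (fun p : ℝ × ℕ => qt (poisCdf A) p.1 + p.2) Po((A + δ).toNNReal)
      (unif.prod Po(δ.toNNReal)) := by
    rw [Real.toNNReal_add hA hδ]
    exact (indepFun_prod (measurable_qt _) measurable_id).hasLaw_add_poissonMeasure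
      ((hasLaw_qt_poisCdf hA).comp measurePreserving_fst.hasLaw) measurePreserving_snd.hasLaw
  calc (unif.prod Po(δ.toNNReal)) {p | p.1 ∈ B ∧ qt (poisCdf A) p.1 + (p.2 + k) ≤ t}
      ≤ min ((unif.prod Po(δ.toNNReal)) (B ×ˢ univ))
          ((unif.prod Po(δ.toNNReal)) {p | qt (poisCdf A) p.1 + p.2 + k ≤ t}) :=
        le_min (measure_mono fun p hp => ⟨hp.1, trivial⟩)
          (measure_mono fun p hp => by simp only [mem_ofPred_eq] at hp ⊢; omega)
    _ = min (unif B) (Po((A + δ).toNNReal) {y | y + k ≤ t}) := by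
        rw [Measure.prod_prod, measure_univ, mul_one, hsum.measure_eq (p := fun y => y + k ≤ t)
          (measurableSet_le (by fun_prop) measurable_const)]
    _ = min (unif B) (unif {x | qt (poisCdf (A + δ)) x + k ≤ t}) := by
        rw [(hasLaw_qt_poisCdf (add_nonneg hA hδ)).measure_eq (p := fun y => y + k ≤ t)
          (measurableSet_le (by fun_prop) measurable_const)]
    _ = unif {x | x ∈ B ∧ qt (poisCdf (A + δ)) x + k ≤ t} :=
        (unif_inter_eq_min hB (isInitialInUnitInterval_qt_add_le (add_nonneg hA hδ) k t)).symm

lemma prod_poissonMeasure_add_le {B : Set ℝ} (hB : IsInitialInUnitInterval B)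
    (hBm : MeasurableSet B) {A C δ : ℝ} (hA : 0 ≤ A) (hC : 0 ≤ C) (hδ : 0 ≤ δ) (b t : ℕ) :
    (unif.prod Po((C + δ).toNNReal)) {p | p.1 ∈ B ∧ qt (poisCdf A) p.1 + (p.2 + b) ≤ t}
      ≤ (unif.prod Po(C.toNNReal))
          {p | p.1 ∈ B ∧ qt (poisCdf (A + δ)) p.1 + (p.2 + b) ≤ t} := by
  rw [Measure.prod_apply_symm (measurableSet_fst_mem_and_qt_add_le hBm _ _ _),
    Measure.prod_apply_symm (measurableSet_fst_mem_and_qt_add_le hBm _ _ _),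
    Real.toNNReal_add hC hδ, ← poissonMeasure_conv_poissonMeasure,
    Measure.lintegral_conv (measurable_of_countable _)]
  refine lintegral_mono fun w => ?_
  calc _ = (unif.prod Po(δ.toNNReal))
          {p | p.1 ∈ B ∧ qt (poisCdf A) p.1 + (p.2 + (w + b)) ≤ t} := by
        rw [Measure.prod_apply_symm (measurableSet_fst_mem_and_qt_add_le hBm _ _ _)]
        congr! 3 with v
        ext x
        exact and_congr_right fun _ => by dsimp only; omega
    _ ≤ _ := prod_poissonMeasure_le_unif hB hA hδ _ _

/-- A point `((x, w), (a, b))` stands for `U = x`, `W = w` and `V = (a, b)`. -/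
def orthantEvent (ν A : ℝ) (s t : ℕ) : Set ((ℝ × ℕ) × (ℕ × ℕ)) :=
  {p | qt (poisCdf ν) p.1.1 + p.2.1 ≤ s ∧ qt (poisCdf A) p.1.1 + (p.1.2 + p.2.2) ≤ t}

lemma measurableSet_orthantEvent (ν A : ℝ) (s t : ℕ) : MeasurableSet (orthantEvent ν A s t) :=
  (measurableSet_le (f := fun p : (ℝ × ℕ) × (ℕ × ℕ) => qt (poisCdf ν) p.1.1 + p.2.1)
    (by fun_prop) measurable_const).inter
  (measurableSet_le (f := fun p : (ℝ × ℕ) × (ℕ × ℕ) => qt (poisCdf A) p.1.1 + (p.1.2 + p.2.2))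
    (by fun_prop) measurable_const)

lemma prod_prod_orthantEvent_le (ρ : Measure (ℕ × ℕ)) [SFinite ρ] {ν A C δ : ℝ}
    (hν : 0 ≤ ν) (hA : 0 ≤ A) (hC : 0 ≤ C) (hδ : 0 ≤ δ) (s t : ℕ) :
    ((unif.prod Po((C + δ).toNNReal)).prod ρ) (orthantEvent ν A s t)
      ≤ ((unif.prod Po(C.toNNReal)).prod ρ) (orthantEvent ν (A + δ) s t) := by
  rw [Measure.prod_apply_symm (measurableSet_orthantEvent _ _ _ _),
    Measure.prod_apply_symm (measurableSet_orthantEvent _ _ _ _)]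
  exact lintegral_mono fun q => prod_poissonMeasure_add_le
    (isInitialInUnitInterval_qt_add_le hν q.1 s)
    (measurableSet_le (by fun_prop) measurable_const) hA hC hδ q.2 t

section Coordinates

variable {ι : Type*} {X : ι → Type*} [∀ i, MeasurableSpace (X i)]

abbrev coordSigma (S : Set ι) : MeasurableSpace (∀ i, X i) :=
  ⨆ i ∈ S, MeasurableSpace.comap (fun x => x i) inferInstance

lemma coordSigma_le_pi (S : Set ι) : coordSigma (X := X) S ≤ MeasurableSpace.pi :=
  iSup₂_le fun i _ => (measurable_pi_apply i).comap_le

lemma measurable_coordSigma_apply {S : Set ι} {i : ι} (hi : i ∈ S) :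
    Measurable[coordSigma S] (fun x : ∀ i, X i => x i) :=
  Measurable.of_comap_le (le_iSup₂ (f := fun i (_ : i ∈ S) =>
    MeasurableSpace.comap (fun x : ∀ i, X i => x i) inferInstance) i hi)

lemma indepFun_of_measurable_coordSigma [Fintype ι] {μ : ∀ i, Measure (X i)}
    [∀ i, IsProbabilityMeasure (μ i)] {β γ : Type*} [MeasurableSpace β] [MeasurableSpace γ]
    {S T : Set ι} (hST : Disjoint S T) {f : (∀ i, X i) → β} {g : (∀ i, X i) → γ}
    (hf : Measurable[coordSigma S] f) (hg : Measurable[coordSigma T] g) :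
    IndepFun f g (Measure.pi μ) := by
  have hcoord : iIndepFun (fun i (x : ∀ i, X i) => x i) (Measure.pi μ) :=
    iIndepFun_pi (X := fun _ => id) fun _ => aemeasurable_id
  rw [IndepFun_iff_Indep]
  exact indep_of_indep_of_le (indep_iSup_of_disjoint (fun i => (measurable_pi_apply i).comap_le)
    ((iIndepFun_iff_iIndep _ _ _).1 hcoord) hST) hf.comap_le hg.comap_le

end Coordinates

lemma hasLaw_pmeas_apply {d : ℕ} (l : Fin d) :
    HasLaw (fun u : Fin d → ℝ => u l) unif (pmeas d) :=
  (measurePreserving_eval (fun _ => unif) l).hasLaw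

lemma hasLaw_sum_qt_poisCdf {d : ℕ} (T : Finset (Fin d)) {c : Fin d → ℝ}
    (hc : ∀ l ∈ T, 0 ≤ c l) :
    HasLaw (fun u : Fin d → ℝ => ∑ l ∈ T, qt (poisCdf (c l)) (u l))
      Po((∑ l ∈ T, c l).toNNReal) (pmeas d) := by
  induction T using Finset.cons_induction with
  | empty =>
    simp only [Finset.sum_empty, Real.toNNReal_zero, poissonMeasure_zero]
    exact hasLaw_dirac_of_ae_eq (ae_of_all _ fun _ => rfl)
  | cons a T ha ih =>
    have hca : 0 ≤ c a := hc a (Finset.mem_cons_self a T)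
    have hcT : ∀ l ∈ T, 0 ≤ c l := fun l hl => hc l (Finset.mem_cons_of_mem hl)
    have hindep : IndepFun (fun u : Fin d → ℝ => qt (poisCdf (c a)) (u a))
        (fun u => ∑ l ∈ T, qt (poisCdf (c l)) (u l)) (pmeas d) :=
      indepFun_of_measurable_coordSigma (S := {a}) (T := T)
        (disjoint_singleton_left.2 ha)
        ((measurable_qt _).comp (measurable_coordSigma_apply rfl))
        (Finset.measurable_sum _ fun l hl =>
          (measurable_qt _).comp (measurable_coordSigma_apply hl))
    simp only [Finset.sum_cons, Real.toNNReal_add hca (Finset.sum_nonneg hcT)]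
    exact hindep.hasLaw_add_poissonMeasure ((hasLaw_qt_poisCdf hca).comp (hasLaw_pmeas_apply a))
      (ih hcT)

lemma hasLaw_pmeas_apply_sum_prod {d : ℕ} {S T : Finset (Fin d)} {k : Fin d} (hkS : k ∉ S)
    (hkT : k ∉ T) (hST : Disjoint S T) {c : Fin d → ℝ} (hc : ∀ l ∈ T, 0 ≤ c l)
    {β : Type*} [MeasurableSpace β] {V : (Fin d → ℝ) → β}
    (hV : Measurable[coordSigma (S : Set (Fin d))] V) :
    HasLaw (fun u => ((u k, ∑ l ∈ T, qt (poisCdf (c l)) (u l)), V u))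
      ((unif.prod Po((∑ l ∈ T, c l).toNNReal)).prod ((pmeas d).map V)) (pmeas d) := by
  have hW : Measurable[coordSigma (insert k (T : Set (Fin d)))]
      fun u : Fin d → ℝ => ∑ l ∈ T, qt (poisCdf (c l)) (u l) :=
    Finset.measurable_sum _ fun l hl =>
      (measurable_qt _).comp (measurable_coordSigma_apply (mem_insert_of_mem _ hl))
  have hUW : IndepFun (fun u : Fin d → ℝ => u k)
      (fun u => ∑ l ∈ T, qt (poisCdf (c l)) (u l)) (pmeas d) :=
    indepFun_of_measurable_coordSigma (S := {k}) (T := T) (disjoint_singleton_left.2 hkT)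
      (measurable_coordSigma_apply rfl)
      (Finset.measurable_sum _ fun l hl => (measurable_qt _).comp (measurable_coordSigma_apply hl))
  have hUWV : IndepFun (fun u : Fin d → ℝ => (u k, ∑ l ∈ T, qt (poisCdf (c l)) (u l))) V
      (pmeas d) :=
    indepFun_of_measurable_coordSigma
      (disjoint_insert_left.2 ⟨hkS, Finset.disjoint_coe.2 hST.symm⟩)
      ((measurable_coordSigma_apply (mem_insert k _)).prodMk hW) hV
  exact hUWV.hasLaw_prod (hUW.hasLaw_prod (hasLaw_pmeas_apply k) (hasLaw_sum_qt_poisCdf T hc))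
    ⟨(hV.mono (coordSigma_le_pi _) le_rfl).aemeasurable, rfl⟩

noncomputable def mpZ (d : ℕ) (lam : Fin d → ℝ) (om : Fin d → Fin d → ℝ) (r l : Fin d)
    (u : Fin d → ℝ) : ℕ :=
  qt (poisCdf (om r l * lam r)) (u l)

lemma pmeas_mpX_le_and_mpX_le {d : ℕ} {lam : Fin d → ℝ} (hlam : ∀ r, 0 ≤ lam r)
    {om : Fin d → Fin d → ℝ} (hom0 : ∀ r s : Fin d, s ≤ r → 0 ≤ om r s) {i j k : Fin d}
    (hij : i < j) (hki : k ≤ i) (s t : ℕ) :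
    pmeas d {u | mpX d lam om i u ≤ s ∧ mpX d lam om j u ≤ t}
      = ((unif.prod Po((∑ l ∈ Finset.Ioc i j, om j l * lam j).toNNReal)).prod ((pmeas d).map
          fun u => (∑ l ∈ (Finset.Iic i).erase k, mpZ d lam om i l u,
            ∑ l ∈ (Finset.Iic i).erase k, mpZ d lam om j l u)))
        (orthantEvent (om i k * lam i) (om j k * lam j) s t) := by
  have hXi : ∀ u, mpX d lam om i u
      = mpZ d lam om i k u + ∑ l ∈ (Finset.Iic i).erase k, mpZ d lam om i l u := fun u =>
    (Finset.add_sum_erase _ _ (Finset.mem_Iic.2 hki)).symm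
  have hXj : ∀ u, mpX d lam om j u = mpZ d lam om j k u
      + (∑ l ∈ Finset.Ioc i j, mpZ d lam om j l u
        + ∑ l ∈ (Finset.Iic i).erase k, mpZ d lam om j l u) := fun u =>
    sum_Iic_eq_add_sum_Ioc_add_sum_erase (mpZ d lam om j · u) hij.le hki
  have hlaw := hasLaw_pmeas_apply_sum_prod (Finset.notMem_erase k (Finset.Iic i))
    (fun h => (Finset.mem_Ioc.1 h).1.not_ge hki)
    (Finset.disjoint_left.2 fun l hl hl' =>
      (Finset.mem_Ioc.1 hl').1.not_ge (Finset.mem_Iic.1 (Finset.mem_of_mem_erase hl)))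
    (fun l hl => mul_nonneg (hom0 j l (Finset.mem_Ioc.1 hl).2) (hlam j))
    (V := fun u => (∑ l ∈ (Finset.Iic i).erase k, mpZ d lam om i l u,
      ∑ l ∈ (Finset.Iic i).erase k, mpZ d lam om j l u))
    ((Finset.measurable_sum _ fun l hl =>
        (measurable_qt _).comp (measurable_coordSigma_apply hl)).prodMk
      (Finset.measurable_sum _ fun l hl =>
        (measurable_qt _).comp (measurable_coordSigma_apply hl)))
  rw [← hlaw.map_eq, Measure.map_apply_of_aemeasurable hlaw.aemeasurable
    (measurableSet_orthantEvent _ _ _ _)]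
  congr 1
  ext u
  simp only [mem_ofPred_eq, mem_preimage, hXi, hXj]
  rfl

/-- Pairwise PQD ordering in the MP_d(Λ,Ω) model: if the two admissible weight arrays Ω, Ω′
agree except that `ω_{jk} < ω′_{jk}`, then `(X_i, X_j) ≺_PQD (X′_i, X′_j)`. -/
theorem mp_pairwise_pqd (d : ℕ)
    (lam : Fin d → ℝ) (hlam : ∀ r, 0 < lam r)
    (om om' : Fin d → Fin d → ℝ)
    (hom0 : ∀ r s : Fin d, s ≤ r → 0 ≤ om r s)
    (hom0' : ∀ r s : Fin d, s ≤ r → 0 ≤ om' r s)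
    (hsum : ∀ r : Fin d, ∑ s ∈ Finset.Iic r, om r s = 1)
    (hsum' : ∀ r : Fin d, ∑ s ∈ Finset.Iic r, om' r s = 1)
    (i j k : Fin d) (hij : i < j) (hki : k ≤ i)
    (hieq : ∀ l : Fin d, l ≤ i → om i l = om' i l)
    (hjeq : ∀ l : Fin d, l ≤ i → l ≠ k → om j l = om' j l)
    (hlt : om j k < om' j k)
    (s t : ℕ) :
    pmeas d {u : Fin d → ℝ | mpX d lam om i u ≤ s ∧ mpX d lam om j u ≤ t}
      ≤ pmeas d {u : Fin d → ℝ | mpX d lam om' i u ≤ s ∧ mpX d lam om' j u ≤ t} := by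
  have hlam' : ∀ r, 0 ≤ lam r := fun r => (hlam r).le
  have hS : ∀ l ∈ (Finset.Iic i).erase k, om i l = om' i l ∧ om j l = om' j l := fun l hl =>
    have hli := Finset.mem_Iic.1 (Finset.mem_of_mem_erase hl)
    ⟨hieq l hli, hjeq l hli (Finset.ne_of_mem_erase hl)⟩
  have hV : (fun u => (∑ l ∈ (Finset.Iic i).erase k, mpZ d lam om' i l u,
        ∑ l ∈ (Finset.Iic i).erase k, mpZ d lam om' j l u))
      = fun u => (∑ l ∈ (Finset.Iic i).erase k, mpZ d lam om i l u,
        ∑ l ∈ (Finset.Iic i).erase k, mpZ d lam om j l u) := by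
    funext u
    congr 1 <;> refine Finset.sum_congr rfl fun l hl => ?_ <;>
      simp only [mpZ, (hS l hl).1, (hS l hl).2]
  have hT : ∑ l ∈ Finset.Ioc i j, om j l * lam j
      = ∑ l ∈ Finset.Ioc i j, om' j l * lam j + (om' j k - om j k) * lam j := by
    have h := hsum j
    have h' := hsum' j
    rw [sum_Iic_eq_add_sum_Ioc_add_sum_erase _ hij.le hki] at h h'
    rw [Finset.sum_congr rfl fun l hl => (hS l hl).2] at h
    rw [← Finset.sum_mul, ← Finset.sum_mul, ← add_mul]
    congr 1
    linarith
  rw [pmeas_mpX_le_and_mpX_le hlam' hom0 hij hki, pmeas_mpX_le_and_mpX_le hlam' hom0' hij hki,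
    hV, hT, ← hieq k hki, show om' j k * lam j = om j k * lam j + (om' j k - om j k) * lam j by ring]
  exact prod_prod_orthantEvent_le _ (mul_nonneg (hom0 i k hki) (hlam' i))
    (mul_nonneg (hom0 j k (hki.trans hij.le)) (hlam' j))
    (Finset.sum_nonneg fun l hl => mul_nonneg (hom0' j l (Finset.mem_Ioc.1 hl).2) (hlam' j))
    (mul_nonneg (sub_nonneg.2 hlt.le) (hlam' j)) s t
end

section
/- Let (Ω, 𝓕, P) be a probability space and X, Y : Ω → ℕ measurable random variables such that the product X·Y is integrable. Then E[X·Y] = Σ_{m=0}^{∞} Σ_{n=0}^{∞} P(X > m and Y > n), where the double series is a tsum over (m,n) ∈ ℕ × ℕ. -/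
open MeasureTheory

lemma tsum_ite_lt (k : ℕ) : ∑' m : ℕ, (if m < k then (1:ENNReal) else 0) = k := by
  rw [tsum_eq_sum (s := Finset.range k) (fun m hm => by simp [Finset.mem_range] at hm; simp [hm])]
  rw [Finset.sum_ite_of_true (fun m hm => Finset.mem_range.mp hm)]
  simp

/-- For ℕ-valued random variables `X, Y` with integrable product,
`E[X·Y] = Σ_{m,n} P(X > m and Y > n)`. -/
theorem expectation_product_eq_tsum_tail {Ω : Type*} [MeasurableSpace Ω]
    (P : Measure Ω) [IsProbabilityMeasure P]
    (X Y : Ω → ℕ) (hX : Measurable X) (hY : Measurable Y)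
    (hint : Integrable (fun w => (X w : ℝ) * (Y w : ℝ)) P) :
    ∫ w, (X w : ℝ) * (Y w : ℝ) ∂P
      = ∑' p : ℕ × ℕ, (P {w | p.1 < X w ∧ p.2 < Y w}).toReal := by
  have key : ∫⁻ w, ((X w : ENNReal) * (Y w : ENNReal)) ∂P
      = ∑' p : ℕ × ℕ, P {w | p.1 < X w ∧ p.2 < Y w} := by
    have hpt : ∀ w, ((X w : ENNReal) * (Y w : ENNReal))
        = ∑' p : ℕ × ℕ, Set.indicator {w | p.1 < X w ∧ p.2 < Y w} (fun _ => (1:ENNReal)) w := by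
      intro w
      have : ∀ p : ℕ × ℕ, Set.indicator {w | p.1 < X w ∧ p.2 < Y w} (fun _ => (1:ENNReal)) w
          = (if p.1 < X w then (1:ENNReal) else 0) * (if p.2 < Y w then 1 else 0) := by
        intro p
        by_cases h1 : p.1 < X w <;> by_cases h2 : p.2 < Y w <;>
          simp [Set.indicator, h1, h2]
      rw [tsum_congr this,
        ENNReal.tsum_prod (f := fun m n => (if m < X w then (1:ENNReal) else 0) * if n < Y w then 1 else 0)]
      simp_rw [ENNReal.tsum_mul_left, ENNReal.tsum_mul_right, tsum_ite_lt]
    have hs : ∀ p : ℕ × ℕ, MeasurableSet {w | p.1 < X w ∧ p.2 < Y w} := fun p =>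
      (hX (measurableSet_Ioi (a := p.1))).inter (hY (measurableSet_Ioi (a := p.2)))
    rw [lintegral_congr hpt, lintegral_tsum fun p =>
      (Measurable.indicator measurable_const (hs p)).aemeasurable]
    refine tsum_congr fun p => ?_
    rw [lintegral_indicator (hs p)]
    simp
  rw [integral_eq_lintegral_of_nonneg_ae (Filter.Eventually.of_forall fun w => by positivity)
      hint.aestronglyMeasurable]
  have : ∀ w, ENNReal.ofReal ((X w : ℝ) * (Y w : ℝ)) = (X w : ENNReal) * (Y w : ENNReal) := by
    intro w
    rw [ENNReal.ofReal_mul (by positivity)]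
    simp [ENNReal.ofReal_natCast]
  simp_rw [this]
  rw [key, ENNReal.tsum_toReal_eq]
  exact fun p => measure_ne_top P _
end

section
/- Let (Ω, 𝓕, P) be a probability space and X, Y : Ω → ℕ measurable random variables such that X, Y, and the product X·Y are integrable. Then the covariance of X and Y satisfies the discrete Hoeffding identity: E[X·Y] − E[X]·E[Y] = Σ_{m=0}^{∞} Σ_{n=0}^{∞} ( P(X > m and Y > n) − P(X > m)·P(Y > n) ), where the double series is a tsum over (m,n) ∈ ℕ × ℕ. -/
open MeasureTheory
open scoped ENNReal

lemma nat_eq_tsum_ite (k : ℕ) : (k : ℝ≥0∞) = ∑' m : ℕ, if m < k then 1 else 0 := by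
  rw [tsum_eq_sum (s := Finset.range k) (fun b hb => if_neg (by simpa using hb))]
  have h : ∀ m ∈ Finset.range k, (if m < k then (1:ℝ≥0∞) else 0) = 1 :=
    fun m hm => if_pos (Finset.mem_range.mp hm)
  rw [Finset.sum_congr rfl h]
  simp

lemma lintegral_nat_eq {Ω : Type*} [MeasurableSpace Ω] (P : Measure Ω)
    (Z : Ω → ℕ) (hZ : Measurable Z) :
    ∫⁻ w, (Z w : ℝ≥0∞) ∂P = ∑' m : ℕ, P {w | m < Z w} := by
  have hmeas : ∀ m : ℕ, MeasurableSet {w | m < Z w} := fun m => hZ measurableSet_Ioi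
  have : ∀ w, (Z w : ℝ≥0∞) = ∑' m : ℕ, Set.indicator {w | m < Z w} (1 : Ω → ℝ≥0∞) w := by
    intro w
    rw [nat_eq_tsum_ite]
    congr 1; ext m
    by_cases h : m < Z w <;> simp [Set.indicator, h]
  simp_rw [this]
  rw [lintegral_tsum (fun m => (measurable_one.indicator (hmeas m)).aemeasurable)]
  congr 1; ext m
  exact lintegral_indicator_one (hmeas m)

lemma real_tsum_prod_mul (f g : ℕ → ℝ) (hf : Summable f) (hg : Summable g)
    (hf0 : ∀ m, 0 ≤ f m) (hg0 : ∀ n, 0 ≤ g n) :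
    ∑' p : ℕ × ℕ, f p.1 * g p.2 = (∑' m, f m) * (∑' n, g n) := by
  rw [Summable.tsum_prod' (hf.mul_of_nonneg hg hf0 hg0) (fun m => hg.mul_left (f m))]
  simp_rw [tsum_mul_left]
  rw [tsum_mul_right]

lemma enn_tsum_prod_mul (f g : ℕ → ℝ≥0∞) :
    ∑' p : ℕ × ℕ, f p.1 * g p.2 = (∑' m, f m) * (∑' n, g n) := by
  rw [ENNReal.tsum_prod']
  simp_rw [ENNReal.tsum_mul_left]
  rw [ENNReal.tsum_mul_right]

lemma lintegral_nat_mul_eq {Ω : Type*} [MeasurableSpace Ω] (P : Measure Ω)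
    (X Y : Ω → ℕ) (hX : Measurable X) (hY : Measurable Y) :
    ∫⁻ w, (X w : ℝ≥0∞) * (Y w : ℝ≥0∞) ∂P
      = ∑' p : ℕ × ℕ, P {w | p.1 < X w ∧ p.2 < Y w} := by
  have hmeas : ∀ p : ℕ × ℕ, MeasurableSet {w : Ω | p.1 < X w ∧ p.2 < Y w} :=
    fun p => (hX measurableSet_Ioi).inter (hY measurableSet_Ioi)
  have key : ∀ w, (X w : ℝ≥0∞) * (Y w : ℝ≥0∞)
      = ∑' p : ℕ × ℕ, Set.indicator {w | p.1 < X w ∧ p.2 < Y w} (1 : Ω → ℝ≥0∞) w := by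
    intro w
    have : ∀ p : ℕ × ℕ, Set.indicator {w | p.1 < X w ∧ p.2 < Y w} (1 : Ω → ℝ≥0∞) w
        = (if p.1 < X w then 1 else 0) * (if p.2 < Y w then 1 else 0) := by
      intro p
      by_cases h1 : p.1 < X w <;> by_cases h2 : p.2 < Y w <;>
        simp [Set.indicator, h1, h2]
    simp_rw [this]
    rw [enn_tsum_prod_mul (fun m => if m < X w then 1 else 0) (fun n => if n < Y w then 1 else 0),
      ← nat_eq_tsum_ite, ← nat_eq_tsum_ite]
  simp_rw [key]
  rw [lintegral_tsum (fun p => (measurable_one.indicator (hmeas p)).aemeasurable)]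
  congr 1; ext p
  exact lintegral_indicator_one (hmeas p)

set_option maxHeartbeats 1000000 in
/-- Discrete Hoeffding identity: for ℕ-valued random variables `X, Y` with `X`, `Y`, `X·Y`
integrable, `cov(X,Y) = Σ_{m,n} (P(X > m, Y > n) − P(X > m)·P(Y > n))`. -/
theorem hoeffding_identity {Ω : Type*} [MeasurableSpace Ω]
    (P : Measure Ω) [IsProbabilityMeasure P]
    (X Y : Ω → ℕ) (hX : Measurable X) (hY : Measurable Y)
    (hiX : Integrable (fun w => (X w : ℝ)) P)
    (hiY : Integrable (fun w => (Y w : ℝ)) P)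
    (hiXY : Integrable (fun w => (X w : ℝ) * (Y w : ℝ)) P) :
    ∫ w, (X w : ℝ) * (Y w : ℝ) ∂P
        - (∫ w, (X w : ℝ) ∂P) * (∫ w, (Y w : ℝ) ∂P)
      = ∑' p : ℕ × ℕ,
          ((P {w | p.1 < X w ∧ p.2 < Y w}).toReal
            - (P {w | p.1 < X w}).toReal * (P {w | p.2 < Y w}).toReal) := by
  -- finiteness of lintegrals
  have hfinXY : ∫⁻ w, (X w : ℝ≥0∞) * (Y w : ℝ≥0∞) ∂P ≠ ∞ := by
    have h := hiXY.hasFiniteIntegral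
    rw [hasFiniteIntegral_iff_ofReal (Filter.Eventually.of_forall fun w => by positivity)] at h
    have : ∀ w, ENNReal.ofReal ((X w : ℝ) * (Y w : ℝ)) = (X w : ℝ≥0∞) * (Y w : ℝ≥0∞) := by
      intro w
      rw [ENNReal.ofReal_mul (by positivity), ENNReal.ofReal_natCast, ENNReal.ofReal_natCast]
    simp_rw [this] at h
    exact h.ne
  have hfinZ : ∀ (Z : Ω → ℕ), Integrable (fun w => (Z w : ℝ)) P →
      ∫⁻ w, (Z w : ℝ≥0∞) ∂P ≠ ∞ := by
    intro Z hiZ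
    have h := hiZ.hasFiniteIntegral
    rw [hasFiniteIntegral_iff_ofReal (Filter.Eventually.of_forall fun w => by positivity)] at h
    simp_rw [ENNReal.ofReal_natCast] at h
    exact h.ne
  -- real integrals as toReal of lintegrals
  have hIZ : ∀ (Z : Ω → ℕ), Measurable Z → Integrable (fun w => (Z w : ℝ)) P →
      ∫ w, (Z w : ℝ) ∂P = ∑' m : ℕ, (P {w | m < Z w}).toReal := by
    intro Z hZ hiZ
    rw [integral_eq_lintegral_of_nonneg_ae (Filter.Eventually.of_forall fun w => by positivity)
      hiZ.aestronglyMeasurable]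
    simp_rw [ENNReal.ofReal_natCast]
    rw [lintegral_nat_eq P Z hZ,
      ENNReal.tsum_toReal_eq (fun m => measure_ne_top P _)]
  have hIXY : ∫ w, (X w : ℝ) * (Y w : ℝ) ∂P
      = ∑' p : ℕ × ℕ, (P {w | p.1 < X w ∧ p.2 < Y w}).toReal := by
    rw [integral_eq_lintegral_of_nonneg_ae (Filter.Eventually.of_forall fun w => by positivity)
      hiXY.aestronglyMeasurable]
    have : ∀ w, ENNReal.ofReal ((X w : ℝ) * (Y w : ℝ)) = (X w : ℝ≥0∞) * (Y w : ℝ≥0∞) := by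
      intro w
      rw [ENNReal.ofReal_mul (by positivity), ENNReal.ofReal_natCast, ENNReal.ofReal_natCast]
    simp_rw [this]
    rw [lintegral_nat_mul_eq P X Y hX hY,
      ENNReal.tsum_toReal_eq (fun p => measure_ne_top P _)]
  -- summability
  have hA : ∑' p : ℕ × ℕ, P {w | p.1 < X w ∧ p.2 < Y w} ≠ ∞ := by
    rw [← lintegral_nat_mul_eq P X Y hX hY]; exact hfinXY
  have hsumA : Summable (fun p : ℕ × ℕ => (P {w | p.1 < X w ∧ p.2 < Y w}).toReal) :=
    ENNReal.summable_toReal hA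
  have hsumX : Summable (fun m : ℕ => (P {w | m < X w}).toReal) :=
    ENNReal.summable_toReal (by rw [← lintegral_nat_eq P X hX]; exact hfinZ X hiX)
  have hsumY : Summable (fun n : ℕ => (P {w | n < Y w}).toReal) :=
    ENNReal.summable_toReal (by rw [← lintegral_nat_eq P Y hY]; exact hfinZ Y hiY)
  have hsumB : Summable (fun p : ℕ × ℕ => (P {w | p.1 < X w}).toReal * (P {w | p.2 < Y w}).toReal) :=
    hsumX.mul_of_nonneg hsumY (fun m => ENNReal.toReal_nonneg) (fun n => ENNReal.toReal_nonneg)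
  have hprod : (∑' m : ℕ, (P {w | m < X w}).toReal) * (∑' n : ℕ, (P {w | n < Y w}).toReal)
      = ∑' p : ℕ × ℕ, (P {w | p.1 < X w}).toReal * (P {w | p.2 < Y w}).toReal := by
    exact (real_tsum_prod_mul _ _ hsumX hsumY (fun m => ENNReal.toReal_nonneg)
      (fun n => ENNReal.toReal_nonneg)).symm
  rw [hIXY, hIZ X hX hiX, hIZ Y hY hiY, hprod, ← Summable.tsum_sub hsumA hsumB]
end

section
/- Let (X, Y) be a pair of ℕ-valued random variables on a probability space (Ω, 𝓕, P) and (X′, Y′) a pair of ℕ-valued random variables on a probability space (Ω′, 𝓕′, P′), with equal margins: P(X ≤ n) = P′(X′ ≤ n) and P(Y ≤ n) = P′(Y′ ≤ n) for all n ∈ ℕ. Suppose the pairs are PQD-ordered: P(X ≤ s, Y ≤ t) ≤ P′(X′ ≤ s, Y′ ≤ t) for all s, t ∈ ℕ. If X, Y, X·Y, X′·Y′ are integrable, then E[X·Y] − E[X]·E[Y] ≤ E′[X′·Y′] − E′[X′]·E′[Y′]; that is, the PQD order implies the ordering of covariances. -/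
/-!
For ℕ-valued random variables `E[X] = ∑ₛ P(X > s)` and `E[X Y] = ∑ₛ,ₜ P(X > s, Y > t)`.
By inclusion–exclusion, `P(X > s, Y > t) = 1 - P(X ≤ s) - P(Y ≤ t) + P(X ≤ s, Y ≤ t)`, so with
equal margins the means agree and the PQD order of the joint distribution functions orders the
mixed moments termwise.
-/

open MeasureTheory
open scoped ENNReal

section

variable {Ω : Type*} [MeasurableSpace Ω] {μ : Measure Ω}

lemma natCast_eq_tsum_ite_lt (n : ℕ) : (n : ℝ≥0∞) = ∑' s : ℕ, if s < n then 1 else 0 := by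
  rw [tsum_eq_sum (s := Finset.range n) fun s hs => by simpa using hs, Finset.sum_boole,
    Finset.filter_true_of_mem fun s hs => Finset.mem_range.mp hs]
  simp

lemma natCast_mul_eq_tsum_ite_lt (m n : ℕ) :
    (m * n : ℝ≥0∞) = ∑' p : ℕ × ℕ, if p.1 < m ∧ p.2 < n then 1 else 0 := by
  rw [tsum_eq_sum (s := Finset.range m ×ˢ Finset.range n) fun p hp => by
    simpa [Finset.mem_product] using hp, Finset.sum_boole,
    Finset.filter_true_of_mem fun p hp => by simpa [Finset.mem_product] using hp]
  simp

lemma lintegral_tsum_ite {ι : Type*} [Countable ι] {p : ι → Ω → Prop}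
    [∀ i w, Decidable (p i w)] (hp : ∀ i, MeasurableSet {w | p i w}) :
    ∫⁻ w, ∑' i, (if p i w then 1 else 0) ∂μ = ∑' i, μ {w | p i w} := by
  have hind : ∀ i, (fun w => if p i w then (1 : ℝ≥0∞) else 0) = {w | p i w}.indicator 1 :=
    fun i => funext fun w => by simp [Set.indicator_apply]
  rw [lintegral_tsum fun i => (hind i ▸ measurable_one.indicator (hp i)).aemeasurable]
  simp_rw [hind, lintegral_indicator_one (hp _)]

lemma lintegral_natCast_eq_tsum_measure_lt {X : Ω → ℕ} (hX : Measurable X) :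
    ∫⁻ w, (X w : ℝ≥0∞) ∂μ = ∑' s : ℕ, μ {w | s < X w} := by
  simp_rw [natCast_eq_tsum_ite_lt]
  exact lintegral_tsum_ite fun s => measurableSet_lt measurable_const hX

lemma lintegral_natCast_mul_eq_tsum_measure_lt {X Y : Ω → ℕ} (hX : Measurable X)
    (hY : Measurable Y) :
    ∫⁻ w, (X w * Y w : ℝ≥0∞) ∂μ = ∑' p : ℕ × ℕ, μ {w | p.1 < X w ∧ p.2 < Y w} := by
  simp_rw [natCast_mul_eq_tsum_ite_lt]
  exact lintegral_tsum_ite fun p =>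
    (measurableSet_lt measurable_const hX).inter (measurableSet_lt measurable_const hY)

lemma integral_natCast_eq_toReal_lintegral {X : Ω → ℕ} (hX : Measurable X) :
    ∫ w, (X w : ℝ) ∂μ = (∫⁻ w, (X w : ℝ≥0∞) ∂μ).toReal := by
  simpa using integral_toReal (measurable_from_nat.comp hX).aemeasurable
    (.of_forall fun w => ENNReal.natCast_lt_top (X w))

lemma integral_natCast_mul_eq_toReal_lintegral {X Y : Ω → ℕ} (hX : Measurable X)
    (hY : Measurable Y) :
    ∫ w, (X w : ℝ) * (Y w : ℝ) ∂μ = (∫⁻ w, (X w * Y w : ℝ≥0∞) ∂μ).toReal := by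
  simpa using integral_natCast_eq_toReal_lintegral (μ := μ) (hX.mul hY)

section Probability

variable {Ω' : Type*} [MeasurableSpace Ω'] {ν : Measure Ω'}
  [IsProbabilityMeasure μ] [IsProbabilityMeasure ν]

lemma prob_compl_eq_of_eq {A : Set Ω} {A' : Set Ω'} (hA : MeasurableSet A)
    (hA' : MeasurableSet A') (h : μ A = ν A') : μ Aᶜ = ν A'ᶜ := by
  rw [prob_compl_eq_one_sub hA, prob_compl_eq_one_sub hA', h]

lemma prob_compl_inter_compl_add (A B : Set Ω) (hA : MeasurableSet A) (hB : MeasurableSet B) :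
    μ (Aᶜ ∩ Bᶜ) + (μ A + μ B) = 1 + μ (A ∩ B) := by
  rw [← measure_union_add_inter A hB, ← add_assoc, add_comm (μ _), ← Set.compl_union,
    measure_add_measure_compl (hA.union hB), measure_univ]

lemma prob_compl_inter_compl_le_of_le {A B : Set Ω} {A' B' : Set Ω'}
    (hA : MeasurableSet A) (hB : MeasurableSet B) (hA' : MeasurableSet A') (hB' : MeasurableSet B')
    (hAA' : μ A = ν A') (hBB' : μ B = ν B') (h : μ (A ∩ B) ≤ ν (A' ∩ B')) :
    μ (Aᶜ ∩ Bᶜ) ≤ ν (A'ᶜ ∩ B'ᶜ) := by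
  have hfin : μ A + μ B ≠ ∞ := by finiteness
  rw [← ENNReal.add_le_add_iff_right hfin, prob_compl_inter_compl_add A B hA hB, hAA', hBB',
    prob_compl_inter_compl_add A' B' hA' hB']
  gcongr

lemma measure_lt_eq_of_forall_measure_le_eq {X : Ω → ℕ} {X' : Ω' → ℕ} (hX : Measurable X)
    (hX' : Measurable X') (h : ∀ n, μ {w | X w ≤ n} = ν {w | X' w ≤ n}) (s : ℕ) :
    μ {w | s < X w} = ν {w | s < X' w} := by
  simpa only [Set.compl_ofPred, not_le] using prob_compl_eq_of_eq
    (measurableSet_le hX measurable_const) (measurableSet_le hX' measurable_const) (h s)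

lemma integral_natCast_eq_of_forall_measure_le_eq {X : Ω → ℕ} {X' : Ω' → ℕ}
    (hX : Measurable X) (hX' : Measurable X') (h : ∀ n, μ {w | X w ≤ n} = ν {w | X' w ≤ n}) :
    ∫ w, (X w : ℝ) ∂μ = ∫ w, (X' w : ℝ) ∂ν := by
  rw [integral_natCast_eq_toReal_lintegral hX, integral_natCast_eq_toReal_lintegral hX',
    lintegral_natCast_eq_tsum_measure_lt hX, lintegral_natCast_eq_tsum_measure_lt hX',
    tsum_congr (measure_lt_eq_of_forall_measure_le_eq hX hX' h)]

lemma integral_natCast_mul_le_of_pqd {X Y : Ω → ℕ} {X' Y' : Ω' → ℕ}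
    (hX : Measurable X) (hY : Measurable Y) (hX' : Measurable X') (hY' : Measurable Y')
    (hmargX : ∀ n, μ {w | X w ≤ n} = ν {w | X' w ≤ n})
    (hmargY : ∀ n, μ {w | Y w ≤ n} = ν {w | Y' w ≤ n})
    (hpqd : ∀ s t, μ {w | X w ≤ s ∧ Y w ≤ t} ≤ ν {w | X' w ≤ s ∧ Y' w ≤ t})
    (hi' : Integrable (fun w => (X' w : ℝ) * (Y' w : ℝ)) ν) :
    ∫ w, (X w : ℝ) * (Y w : ℝ) ∂μ ≤ ∫ w, (X' w : ℝ) * (Y' w : ℝ) ∂ν := by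
  have hsurv (s t : ℕ) : μ {w | s < X w ∧ t < Y w} ≤ ν {w | s < X' w ∧ t < Y' w} := by
    simpa only [Set.compl_ofPred, not_le, ← Set.ofPred_and] using
      prob_compl_inter_compl_le_of_le (measurableSet_le hX measurable_const)
        (measurableSet_le hY measurable_const) (measurableSet_le hX' measurable_const)
        (measurableSet_le hY' measurable_const) (hmargX s) (hmargY t) (hpqd s t)
  have hfin : ∫⁻ w, (X' w * Y' w : ℝ≥0∞) ∂ν ≠ ∞ := by
    simpa [ENNReal.ofReal_mul] using hi'.lintegral_lt_top.ne
  rw [integral_natCast_mul_eq_toReal_lintegral hX hY,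
    integral_natCast_mul_eq_toReal_lintegral hX' hY']
  refine ENNReal.toReal_mono hfin ?_
  rw [lintegral_natCast_mul_eq_tsum_measure_lt hX hY,
    lintegral_natCast_mul_eq_tsum_measure_lt hX' hY']
  exact ENNReal.tsum_le_tsum fun p => hsurv p.1 p.2

end Probability

end

theorem pqd_implies_cov_le_general {Ω : Type*} [MeasurableSpace Ω]
    (P : Measure Ω) [IsProbabilityMeasure P]
    {Ω' : Type*} [MeasurableSpace Ω'] (P' : Measure Ω') [IsProbabilityMeasure P']
    (X Y : Ω → ℕ) (X' Y' : Ω' → ℕ)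
    (hX : Measurable X) (hY : Measurable Y) (hX' : Measurable X') (hY' : Measurable Y')
    (hmargX : ∀ n : ℕ, P {w | X w ≤ n} = P' {w | X' w ≤ n})
    (hmargY : ∀ n : ℕ, P {w | Y w ≤ n} = P' {w | Y' w ≤ n})
    (hpqd : ∀ s t : ℕ, P {w | X w ≤ s ∧ Y w ≤ t} ≤ P' {w | X' w ≤ s ∧ Y' w ≤ t})
    (hiXY' : Integrable (fun w => (X' w : ℝ) * (Y' w : ℝ)) P') :
    ∫ w, (X w : ℝ) * (Y w : ℝ) ∂P - (∫ w, (X w : ℝ) ∂P) * (∫ w, (Y w : ℝ) ∂P)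
      ≤ ∫ w, (X' w : ℝ) * (Y' w : ℝ) ∂P'
          - (∫ w, (X' w : ℝ) ∂P') * (∫ w, (Y' w : ℝ) ∂P') := by
  rw [integral_natCast_eq_of_forall_measure_le_eq hX hX' hmargX,
    integral_natCast_eq_of_forall_measure_le_eq hY hY' hmargY]
  exact sub_le_sub_right
    (integral_natCast_mul_le_of_pqd hX hY hX' hY' hmargX hmargY hpqd hiXY') _

/-- The PQD order (for ℕ-valued pairs with equal margins) implies the ordering of
covariances. -/
theorem pqd_implies_cov_le {Ω : Type*} [MeasurableSpace Ω]
    (P : Measure Ω) [IsProbabilityMeasure P]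
    {Ω' : Type*} [MeasurableSpace Ω'] (P' : Measure Ω') [IsProbabilityMeasure P']
    (X Y : Ω → ℕ) (X' Y' : Ω' → ℕ)
    (hX : Measurable X) (hY : Measurable Y) (hX' : Measurable X') (hY' : Measurable Y')
    (hmargX : ∀ n : ℕ, P {w | X w ≤ n} = P' {w | X' w ≤ n})
    (hmargY : ∀ n : ℕ, P {w | Y w ≤ n} = P' {w | Y' w ≤ n})
    (hpqd : ∀ s t : ℕ, P {w | X w ≤ s ∧ Y w ≤ t} ≤ P' {w | X' w ≤ s ∧ Y' w ≤ t})
    (hiX : Integrable (fun w => (X w : ℝ)) P)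
    (hiY : Integrable (fun w => (Y w : ℝ)) P)
    (hiXY : Integrable (fun w => (X w : ℝ) * (Y w : ℝ)) P)
    (hiXY' : Integrable (fun w => (X' w : ℝ) * (Y' w : ℝ)) P') :
    ∫ w, (X w : ℝ) * (Y w : ℝ) ∂P - (∫ w, (X w : ℝ) ∂P) * (∫ w, (Y w : ℝ) ∂P)
      ≤ ∫ w, (X' w : ℝ) * (Y' w : ℝ) ∂P'
          - (∫ w, (X' w : ℝ) ∂P') * (∫ w, (Y' w : ℝ) ∂P') :=
  pqd_implies_cov_le_general P P' X Y X' Y' hX hY hX' hY' hmargX hmargY hpqd hiXY'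
end

section
/- Let (X_1, X_2) and (Y_1, Y_2) be pairs of ℕ-valued random variables on a probability space (Ω, 𝓕, P) such that the pair (X_1, X_2) is independent of the pair (Y_1, Y_2), and let (X′_1, X′_2) and (Y′_1, Y′_2) be pairs of ℕ-valued random variables on a probability space (Ω′, 𝓕′, P′) such that (X′_1, X′_2) is independent of (Y′_1, Y′_2). Suppose the margins match: P(X_r ≤ n) = P′(X′_r ≤ n) and P(Y_r ≤ n) = P′(Y′_r ≤ n) for r = 1,2 and all n ∈ ℕ, and suppose the pairs are PQD-ordered: P(X_1 ≤ s, X_2 ≤ t) ≤ P′(X′_1 ≤ s, X′_2 ≤ t) and P(Y_1 ≤ s, Y_2 ≤ t) ≤ P′(Y′_1 ≤ s, Y′_2 ≤ t) for all s, t ∈ ℕ. Then the convolved pairs are PQD-ordered: P(X_1 + Y_1 ≤ s, X_2 + Y_2 ≤ t) ≤ P′(X′_1 + Y′_1 ≤ s, X′_2 + Y′_2 ≤ t) for all s, t ∈ ℕ. -/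
open MeasureTheory ProbabilityTheory

private lemma pqd_tri_ite {t j : ℕ} (hj : j ≤ t) (h : ℕ → ENNReal) :
    (∑ b ∈ Finset.range (t - j + 1), h b)
      = ∑ b ∈ Finset.range (t + 1), if j + b ≤ t then h b else 0 := by
  rw [← Finset.sum_filter]
  apply Finset.sum_congr _ (fun _ _ => rfl)
  ext b
  simp only [Finset.mem_filter, Finset.mem_range, Nat.lt_succ_iff]
  omega

private lemma pqd_tri_double (s t : ℕ) {i j : ℕ} (hi : i ≤ s) (hj : j ≤ t)
    (Q : ℕ → ℕ → ENNReal) :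
    (∑ a ∈ Finset.range (s - i + 1), ∑ b ∈ Finset.range (t - j + 1), Q a b)
      = ∑ a ∈ Finset.range (s + 1), ∑ b ∈ Finset.range (t + 1),
          if i + a ≤ s ∧ j + b ≤ t then Q a b else 0 := by
  rw [pqd_tri_ite hi (fun a => ∑ b ∈ Finset.range (t - j + 1), Q a b)]
  refine Finset.sum_congr rfl fun a _ => ?_
  by_cases h : i + a ≤ s
  · simp only [h, if_true, true_and]
    exact pqd_tri_ite hj (Q a)
  · simp [h]

private lemma pqd_swap (s t : ℕ) (A Q : ℕ → ℕ → ENNReal) :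
    (∑ i ∈ Finset.range (s + 1), ∑ j ∈ Finset.range (t + 1),
        A i j * ∑ a ∈ Finset.range (s - i + 1), ∑ b ∈ Finset.range (t - j + 1), Q a b)
      = ∑ a ∈ Finset.range (s + 1), ∑ b ∈ Finset.range (t + 1),
          Q a b * ∑ i ∈ Finset.range (s - a + 1), ∑ j ∈ Finset.range (t - b + 1), A i j := by
  have key : ∀ (A Q : ℕ → ℕ → ENNReal),
      (∑ i ∈ Finset.range (s + 1), ∑ j ∈ Finset.range (t + 1),
        A i j * ∑ a ∈ Finset.range (s - i + 1), ∑ b ∈ Finset.range (t - j + 1), Q a b)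
      = ∑ i ∈ Finset.range (s + 1), ∑ j ∈ Finset.range (t + 1),
          ∑ a ∈ Finset.range (s + 1), ∑ b ∈ Finset.range (t + 1),
            if i + a ≤ s ∧ j + b ≤ t then A i j * Q a b else 0 := by
    intro A Q
    refine Finset.sum_congr rfl fun i hi => Finset.sum_congr rfl fun j hj => ?_
    have hi' : i ≤ s := Nat.lt_succ_iff.mp (Finset.mem_range.mp hi)
    have hj' : j ≤ t := Nat.lt_succ_iff.mp (Finset.mem_range.mp hj)
    rw [pqd_tri_double s t hi' hj' Q, Finset.mul_sum]
    refine Finset.sum_congr rfl fun a _ => ?_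
    rw [Finset.mul_sum]
    refine Finset.sum_congr rfl fun b _ => ?_
    by_cases h : i + a ≤ s ∧ j + b ≤ t <;> simp [h]
  rw [key A Q, key Q A]
  calc (∑ i ∈ Finset.range (s + 1), ∑ j ∈ Finset.range (t + 1),
          ∑ a ∈ Finset.range (s + 1), ∑ b ∈ Finset.range (t + 1),
            if i + a ≤ s ∧ j + b ≤ t then A i j * Q a b else 0)
      = ∑ i ∈ Finset.range (s + 1), ∑ a ∈ Finset.range (s + 1),
          ∑ j ∈ Finset.range (t + 1), ∑ b ∈ Finset.range (t + 1),
            if i + a ≤ s ∧ j + b ≤ t then A i j * Q a b else 0 :=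
        Finset.sum_congr rfl fun i _ => Finset.sum_comm
    _ = ∑ a ∈ Finset.range (s + 1), ∑ i ∈ Finset.range (s + 1),
          ∑ j ∈ Finset.range (t + 1), ∑ b ∈ Finset.range (t + 1),
            if i + a ≤ s ∧ j + b ≤ t then A i j * Q a b else 0 :=
        Finset.sum_comm
    _ = ∑ a ∈ Finset.range (s + 1), ∑ i ∈ Finset.range (s + 1),
          ∑ b ∈ Finset.range (t + 1), ∑ j ∈ Finset.range (t + 1),
            if i + a ≤ s ∧ j + b ≤ t then A i j * Q a b else 0 :=
        Finset.sum_congr rfl fun a _ => Finset.sum_congr rfl fun i _ => Finset.sum_comm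
    _ = ∑ a ∈ Finset.range (s + 1), ∑ b ∈ Finset.range (t + 1),
          ∑ i ∈ Finset.range (s + 1), ∑ j ∈ Finset.range (t + 1),
            if i + a ≤ s ∧ j + b ≤ t then A i j * Q a b else 0 :=
        Finset.sum_congr rfl fun a _ => Finset.sum_comm
    _ = ∑ a ∈ Finset.range (s + 1), ∑ b ∈ Finset.range (t + 1),
          ∑ i ∈ Finset.range (s + 1), ∑ j ∈ Finset.range (t + 1),
            if a + i ≤ s ∧ b + j ≤ t then Q a b * A i j else 0 := by
        refine Finset.sum_congr rfl fun a _ => Finset.sum_congr rfl fun b _ =>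
          Finset.sum_congr rfl fun i _ => Finset.sum_congr rfl fun j _ => ?_
        rw [add_comm a i, add_comm b j, mul_comm]

private lemma pqd_cdf_eq {Ω : Type*} [MeasurableSpace Ω] (P : Measure Ω)
    (A B : Ω → ℕ) (hA : Measurable A) (hB : Measurable B) (m n : ℕ) :
    P {w | A w ≤ m ∧ B w ≤ n}
      = ∑ p ∈ Finset.range (m + 1) ×ˢ Finset.range (n + 1),
          P {w | A w = p.1 ∧ B w = p.2} := by
  have hset : {w | A w ≤ m ∧ B w ≤ n}
      = ⋃ p ∈ (Finset.range (m + 1) ×ˢ Finset.range (n + 1) : Finset (ℕ × ℕ)),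
          {w | A w = p.1 ∧ B w = p.2} := by
    ext w
    simp only [Set.mem_setOf_eq, Set.mem_iUnion, Finset.mem_product, Finset.mem_range,
      Nat.lt_succ_iff]
    constructor
    · rintro ⟨h1, h2⟩
      exact ⟨(A w, B w), ⟨h1, h2⟩, rfl, rfl⟩
    · rintro ⟨⟨p1, p2⟩, ⟨h1, h2⟩, rfl, rfl⟩
      exact ⟨h1, h2⟩
  rw [hset, measure_biUnion_finset]
  · intro p _ q _ hpq
    rw [Function.onFun, Set.disjoint_left]
    rintro w ⟨h1, h2⟩ ⟨h3, h4⟩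
    exact hpq (Prod.ext (h1.symm.trans h3) (h2.symm.trans h4))
  · intro p _
    exact ((hA (measurableSet_singleton p.1)).inter (hB (measurableSet_singleton p.2)))

private lemma pqd_conv_eq {Ω : Type*} [MeasurableSpace Ω] (P : Measure Ω)
    (U₁ U₂ V₁ V₂ : Ω → ℕ) (hU₁ : Measurable U₁) (hU₂ : Measurable U₂)
    (hV₁ : Measurable V₁) (hV₂ : Measurable V₂)
    (hind : IndepFun (fun w => (U₁ w, U₂ w)) (fun w => (V₁ w, V₂ w)) P) (s t : ℕ) :
    P {w | U₁ w + V₁ w ≤ s ∧ U₂ w + V₂ w ≤ t}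
      = ∑ i ∈ Finset.range (s + 1), ∑ j ∈ Finset.range (t + 1),
          P {w | U₁ w = i ∧ U₂ w = j} * P {w | V₁ w ≤ s - i ∧ V₂ w ≤ t - j} := by
  have hset : {w | U₁ w + V₁ w ≤ s ∧ U₂ w + V₂ w ≤ t}
      = ⋃ p ∈ (Finset.range (s + 1) ×ˢ Finset.range (t + 1) : Finset (ℕ × ℕ)),
          ({w | U₁ w = p.1 ∧ U₂ w = p.2} ∩ {w | V₁ w ≤ s - p.1 ∧ V₂ w ≤ t - p.2}) := by
    ext w
    simp only [Set.mem_setOf_eq, Set.mem_iUnion, Finset.mem_product, Finset.mem_range,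
      Nat.lt_succ_iff, Set.mem_inter_iff]
    constructor
    · rintro ⟨h1, h2⟩
      exact ⟨(U₁ w, U₂ w), ⟨by omega, by omega⟩, ⟨rfl, rfl⟩, by omega, by omega⟩
    · rintro ⟨⟨p1, p2⟩, ⟨h1, h2⟩, ⟨rfl, rfl⟩, hc, hd⟩
      constructor <;> omega
  rw [hset, measure_biUnion_finset, Finset.sum_product]
  · refine Finset.sum_congr rfl fun i _ => Finset.sum_congr rfl fun j _ => ?_
    have h1 : {w | U₁ w = i ∧ U₂ w = j}
        = (fun w => (U₁ w, U₂ w)) ⁻¹' {(i, j)} := by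
      ext w; simp [Prod.ext_iff]
    have h2 : {w | V₁ w ≤ s - i ∧ V₂ w ≤ t - j}
        = (fun w => (V₁ w, V₂ w)) ⁻¹' {p : ℕ × ℕ | p.1 ≤ s - i ∧ p.2 ≤ t - j} := by
      ext w; simp
    rw [h1, h2,
      hind.measure_inter_preimage_eq_mul _ _ (Set.to_countable _).measurableSet
        (Set.to_countable _).measurableSet]
  · intro p _ q _ hpq
    rw [Function.onFun, Set.disjoint_left]
    rintro w ⟨⟨h1, h2⟩, -⟩ ⟨⟨h3, h4⟩, -⟩
    exact hpq (Prod.ext (h1.symm.trans h3) (h2.symm.trans h4))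
  · intro p _
    refine (((hU₁ (measurableSet_singleton p.1)).inter
      (hU₂ (measurableSet_singleton p.2))).inter ?_)
    exact ((hV₁ measurableSet_Iic).inter (hV₂ measurableSet_Iic))

/-- The PQD order is closed under convolutions: if `(X₁,X₂) ⊥ (Y₁,Y₂)` and
`(X₁',X₂') ⊥ (Y₁',Y₂')`, the margins match, and both pairs are PQD-ordered, then the
convolved pairs `(X₁+Y₁, X₂+Y₂)` and `(X₁'+Y₁', X₂'+Y₂')` are PQD-ordered. -/
theorem pqd_closed_under_convolution
    {Ω : Type*} [MeasurableSpace Ω] (P : Measure Ω) [IsProbabilityMeasure P]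
    {Ω' : Type*} [MeasurableSpace Ω'] (P' : Measure Ω') [IsProbabilityMeasure P']
    (X₁ X₂ Y₁ Y₂ : Ω → ℕ) (X₁' X₂' Y₁' Y₂' : Ω' → ℕ)
    (hX₁ : Measurable X₁) (hX₂ : Measurable X₂) (hY₁ : Measurable Y₁) (hY₂ : Measurable Y₂)
    (hX₁' : Measurable X₁') (hX₂' : Measurable X₂')
    (hY₁' : Measurable Y₁') (hY₂' : Measurable Y₂')
    (hindep : IndepFun (fun w => (X₁ w, X₂ w)) (fun w => (Y₁ w, Y₂ w)) P)
    (hindep' : IndepFun (fun w => (X₁' w, X₂' w)) (fun w => (Y₁' w, Y₂' w)) P')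
    (hmargX₁ : ∀ n : ℕ, P {w | X₁ w ≤ n} = P' {w | X₁' w ≤ n})
    (hmargX₂ : ∀ n : ℕ, P {w | X₂ w ≤ n} = P' {w | X₂' w ≤ n})
    (hmargY₁ : ∀ n : ℕ, P {w | Y₁ w ≤ n} = P' {w | Y₁' w ≤ n})
    (hmargY₂ : ∀ n : ℕ, P {w | Y₂ w ≤ n} = P' {w | Y₂' w ≤ n})
    (hpqdX : ∀ s t : ℕ, P {w | X₁ w ≤ s ∧ X₂ w ≤ t} ≤ P' {w | X₁' w ≤ s ∧ X₂' w ≤ t})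
    (hpqdY : ∀ s t : ℕ, P {w | Y₁ w ≤ s ∧ Y₂ w ≤ t} ≤ P' {w | Y₁' w ≤ s ∧ Y₂' w ≤ t}) :
    ∀ s t : ℕ, P {w | X₁ w + Y₁ w ≤ s ∧ X₂ w + Y₂ w ≤ t}
      ≤ P' {w | X₁' w + Y₁' w ≤ s ∧ X₂' w + Y₂' w ≤ t} := by
  intro s t
  set A : ℕ → ℕ → ENNReal := fun i j => P {w | Y₁ w = i ∧ Y₂ w = j} with hA
  set Q : ℕ → ℕ → ENNReal := fun a b => P' {w | X₁' w = a ∧ X₂' w = b} with hQ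
  have step0 : {w | X₁ w + Y₁ w ≤ s ∧ X₂ w + Y₂ w ≤ t}
      = {w | Y₁ w + X₁ w ≤ s ∧ Y₂ w + X₂ w ≤ t} := by
    ext w
    simp only [Set.mem_setOf_eq]
    constructor <;> (rintro ⟨h1, h2⟩; exact ⟨by omega, by omega⟩)
  calc P {w | X₁ w + Y₁ w ≤ s ∧ X₂ w + Y₂ w ≤ t}
      = ∑ i ∈ Finset.range (s + 1), ∑ j ∈ Finset.range (t + 1),
          A i j * P {w | X₁ w ≤ s - i ∧ X₂ w ≤ t - j} := by
        rw [step0]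
        exact pqd_conv_eq P Y₁ Y₂ X₁ X₂ hY₁ hY₂ hX₁ hX₂ hindep.symm s t
    _ ≤ ∑ i ∈ Finset.range (s + 1), ∑ j ∈ Finset.range (t + 1),
          A i j * P' {w | X₁' w ≤ s - i ∧ X₂' w ≤ t - j} := by
        refine Finset.sum_le_sum fun i _ => Finset.sum_le_sum fun j _ => ?_
        exact mul_le_mul_right (hpqdX (s - i) (t - j)) _
    _ = ∑ i ∈ Finset.range (s + 1), ∑ j ∈ Finset.range (t + 1),
          A i j * ∑ a ∈ Finset.range (s - i + 1), ∑ b ∈ Finset.range (t - j + 1), Q a b := by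
        refine Finset.sum_congr rfl fun i _ => Finset.sum_congr rfl fun j _ => ?_
        rw [pqd_cdf_eq P' X₁' X₂' hX₁' hX₂' (s - i) (t - j), Finset.sum_product]
    _ = ∑ a ∈ Finset.range (s + 1), ∑ b ∈ Finset.range (t + 1),
          Q a b * ∑ i ∈ Finset.range (s - a + 1), ∑ j ∈ Finset.range (t - b + 1), A i j :=
        pqd_swap s t A Q
    _ = ∑ a ∈ Finset.range (s + 1), ∑ b ∈ Finset.range (t + 1),
          Q a b * P {w | Y₁ w ≤ s - a ∧ Y₂ w ≤ t - b} := by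
        refine Finset.sum_congr rfl fun a _ => Finset.sum_congr rfl fun b _ => ?_
        rw [pqd_cdf_eq P Y₁ Y₂ hY₁ hY₂ (s - a) (t - b), Finset.sum_product]
    _ ≤ ∑ a ∈ Finset.range (s + 1), ∑ b ∈ Finset.range (t + 1),
          Q a b * P' {w | Y₁' w ≤ s - a ∧ Y₂' w ≤ t - b} := by
        refine Finset.sum_le_sum fun a _ => Finset.sum_le_sum fun b _ => ?_
        exact mul_le_mul_right (hpqdY (s - a) (t - b)) _
    _ = P' {w | X₁' w + Y₁' w ≤ s ∧ X₂' w + Y₂' w ≤ t} :=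
        (pqd_conv_eq P' X₁' X₂' Y₁' Y₂' hX₁' hX₂' hY₁' hY₂' hindep' s t).symm
end
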